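/- arXiv:2402.10829 — 4 statements merged into one kernel-verified Lean document; each statement's English description precedes it below -/
import Mathlib

section
/- Let K be a complete discrete valued field of characteristic p > 0 with valuation v normalized so v(K^*) = ℤ, and let L/K be a totally ramified purely inseparable field extension of degree p^m. Then L/K is a simple extension: there exists y ∈ L with L = K(y), y^{p^m} = b ∈ K^*, and gcd(v(b), p) = 1. -/
/-- A complete discrete valued field: an additive valuation `v` with value group `ℤ`
(normalized so that `v(K^*) = ℤ`), written additively with `v 0 = ⊤`, which is
complete: every Cauchy sequence (with respect to `v`) converges. -/
structure CompleteDiscreteValuation (K : Type*) [Field K] where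
  v : K → WithTop ℤ
  v_eq_top_iff : ∀ x : K, v x = ⊤ ↔ x = 0
  v_mul : ∀ x y : K, v (x * y) = v x + v y
  v_add : ∀ x y : K, min (v x) (v y) ≤ v (x + y)
  v_surj : ∀ n : ℤ, ∃ x : K, v x = (n : WithTop ℤ)
  complete : ∀ a : ℕ → K,
    (∀ N : ℤ, ∃ M : ℕ, ∀ m n : ℕ, M ≤ m → M ≤ n → (N : WithTop ℤ) ≤ v (a m - a n)) →
    ∃ l : K, ∀ N : ℤ, ∃ M : ℕ, ∀ n : ℕ, M ≤ n → (N : WithTop ℤ) ≤ v (a n - l)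

/-- The (unique) extension of the valuation of `K` to a finite field extension `L`,
with values normalized so that the value group of `K` is `ℤ` (hence the values on `L`
are rational numbers). -/
structure ExtValuation (K L : Type*) [Field K] [Field L] [Algebra K L]
    (vK : CompleteDiscreteValuation K) where
  w : L → WithTop ℚ
  w_eq_top_iff : ∀ x : L, w x = ⊤ ↔ x = 0
  w_mul : ∀ x y : L, w (x * y) = w x + w y
  w_add : ∀ x y : L, min (w x) (w y) ≤ w (x + y)
  w_extends : ∀ c : K, w (algebraMap K L c) = (vK.v c).map (fun n : ℤ => (n : ℚ))

/-- `L/K` of degree `n` is totally ramified: the value group of `L` is `(1/n)ℤ`. -/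
def ExtValuation.TotallyRamified {K L : Type*} [Field K] [Field L] [Algebra K L]
    {vK : CompleteDiscreteValuation K} (wL : ExtValuation K L vK) (n : ℕ) : Prop :=
  (∀ x : L, x ≠ 0 → ∃ m : ℤ, wL.w x = ((m : ℚ) / (n : ℚ) : ℚ)) ∧
  ∃ x : L, wL.w x = (((1 : ℚ) / (n : ℚ) : ℚ) : WithTop ℚ)

/-- `L/K` is unramified: the value group of `L` is `ℤ`. -/
def ExtValuation.Unramified {K L : Type*} [Field K] [Field L] [Algebra K L]
    {vK : CompleteDiscreteValuation K} (wL : ExtValuation K L vK) : Prop :=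
  ∀ x : L, x ≠ 0 → ∃ m : ℤ, wL.w x = ((m : ℚ) : WithTop ℚ)

/-- A totally ramified purely inseparable extension `L/K` of degree `p^m` of a complete
discrete valued field is simple: `L = K(y)` with `y^{p^m} = b ∈ K^*` and `gcd(v(b), p) = 1`. -/
theorem stmt4 (K L : Type*) [Field K] [Field L] [Algebra K L] (p : ℕ) [Fact p.Prime]
    [CharP K p] (vK : CompleteDiscreteValuation K) (wL : ExtValuation K L vK)
    [FiniteDimensional K L] (m : ℕ) (hdeg : Module.finrank K L = p ^ m)
    [IsPurelyInseparable K L] (htr : wL.TotallyRamified (p ^ m)) :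
    ∃ (y : L) (b : K), b ≠ 0 ∧ y ^ p ^ m = algebraMap K L b ∧
      Algebra.adjoin K {y} = (⊤ : Subalgebra K L) ∧
      ∃ vb : ℤ, vK.v b = (vb : WithTop ℤ) ∧ Int.gcd vb p = 1 := by
  obtain ⟨h1, y, hy⟩ := htr
  have hp1 : (1 : ℕ) < p := (Fact.out : p.Prime).one_lt
  have hpm0 : (0 : ℚ) < (p : ℚ) ^ m := by positivity
  -- y ≠ 0
  have hy0 : y ≠ 0 := by
    intro h
    rw [h, (wL.w_eq_top_iff 0).2 rfl] at hy
    exact (WithTop.top_ne_coe) hy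
  -- w 1 = 0
  have hw1 : wL.w 1 = 0 := by
    have h11 : wL.w 1 = wL.w 1 + wL.w 1 := by
      conv_lhs => rw [← mul_one (1 : L)]
      exact wL.w_mul 1 1
    have hne : wL.w 1 ≠ ⊤ := fun h => one_ne_zero ((wL.w_eq_top_iff 1).1 h)
    lift wL.w 1 to ℚ using hne with q hq
    rw [← WithTop.coe_add, WithTop.coe_eq_coe] at h11
    have : q = 0 := by linarith
    rw [this]; rfl
  -- w (y ^ k) = k / p^m
  have hwpow : ∀ k : ℕ, wL.w (y ^ k) = (((k : ℚ) / (p ^ m : ℕ) : ℚ) : WithTop ℚ) := by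
    intro k
    induction k with
    | zero => simpa using hw1
    | succ k ih =>
      rw [pow_succ, wL.w_mul, ih, hy]
      rw [← WithTop.coe_add, WithTop.coe_eq_coe]
      push_cast
      ring
  haveI : ExpChar K p := ExpChar.prime (Fact.out : p.Prime)
  obtain ⟨n, c, hmin⟩ := IsPurelyInseparable.minpoly_eq_X_pow_sub_C K p y
  have hint : IsIntegral K y := IsIntegral.of_finite K y
  have hmd : (minpoly K y).natDegree = p ^ n := by
    rw [hmin, Polynomial.natDegree_X_pow_sub_C]
  -- y ^ p ^ n = algebraMap c
  have hpow : y ^ p ^ n = algebraMap K L c := by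
    have := minpoly.aeval K y
    rw [hmin] at this
    simpa [sub_eq_zero] using this
  have hc0 : c ≠ 0 := by
    intro h
    rw [h, map_zero] at hpow
    exact hy0 (pow_eq_zero_iff (by positivity) |>.1 hpow)
  -- v c is an integer
  have hvc : vK.v c ≠ ⊤ := fun h => hc0 ((vK.v_eq_top_iff c).1 h)
  obtain ⟨k, hk⟩ := WithTop.ne_top_iff_exists.1 hvc
  -- w (y ^ p ^ n) = k, so p^n / p^m = k
  have heq : ((k : ℚ) : WithTop ℚ) = ((((p ^ n : ℕ) : ℚ) / ((p ^ m : ℕ) : ℚ) : ℚ) : WithTop ℚ) := by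
    rw [← hwpow, hpow, wL.w_extends, ← hk]; rfl
  rw [WithTop.coe_eq_coe] at heq
  -- n ≤ m from minpoly degree
  have hnm : n ≤ m := by
    have h3 : (minpoly K y).natDegree ≤ Module.finrank K L := minpoly.natDegree_le y
    rw [hmd, hdeg] at h3
    exact (pow_le_pow_iff_right₀ hp1).1 h3
  -- m ≤ n from valuation integrality
  have hmn : m ≤ n := by
    by_contra h
    push_cast at heq
    have hlt : (p : ℚ) ^ n < (p : ℚ) ^ m := by
      apply pow_lt_pow_right₀ (by exact_mod_cast hp1) (by omega)
    have hpos : (0 : ℚ) < (p : ℚ) ^ n := by positivity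
    have hk1 : (1 : ℚ) ≤ (k : ℚ) := by
      have : (0 : ℚ) < (k : ℚ) := by
        rw [heq]; positivity
      exact_mod_cast (by exact_mod_cast this : (0 : ℤ) < k)
    rw [heq] at hk1
    have := (div_lt_one hpm0).2 hlt
    linarith
  have hnm' : n = m := le_antisymm hnm hmn
  subst hnm'
  -- k = 1
  have hk1 : k = 1 := by
    have : ((p ^ n : ℕ) : ℚ) / ((p ^ n : ℕ) : ℚ) = 1 := by
      apply div_self; positivity
    rw [this] at heq
    exact_mod_cast heq
  -- adjoin eq top
  have htop : Algebra.adjoin K {y} = (⊤ : Subalgebra K L) := by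
    have h4 : IntermediateField.adjoin K {y} = ⊤ := by
      apply IntermediateField.eq_of_le_of_finrank_eq le_top
      rw [IntermediateField.adjoin.finrank hint, hmd, IntermediateField.finrank_top', hdeg]
    have h5 := IntermediateField.adjoin_simple_toSubalgebra_of_isAlgebraic hint.isAlgebraic
    rw [← h5, h4]
    rfl
  exact ⟨y, c, hc0, hpow, htop, k, hk.symm, by rw [hk1]; simp⟩
end

section
/- Let K be a complete discrete valued field of characteristic p > 0 and let η = (η₁, η₂) be a Witt vector of length 2 over K with v(η₁) < 0, v(η₁) < v(η₂), and v(η₁) ∉ pℤ. Then the degree-p² cyclic extension K_η = K(x₁, x₂) defined by x₁^p - x₁ = η₁ and x₂^p - x₂ = η₂ - Σ_{i=1}^{p-1} ((p-1)!/(i!(p-i)!)) η₁^i x₁^{p-i} is totally ramified over K; in particular v(x₂) ∈ (1/p²)ℤ \ (1/p)ℤ. -/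
section helpers
variable {K L : Type*} [Field K] [Field L] [Algebra K L] {vK : CompleteDiscreteValuation K}
  (wL : ExtValuation K L vK)

lemma w_zero : wL.w 0 = ⊤ := (wL.w_eq_top_iff 0).2 rfl

lemma w_ne_top {x : L} (h : x ≠ 0) : wL.w x ≠ ⊤ := fun ht => h ((wL.w_eq_top_iff x).1 ht)

lemma w_one : wL.w 1 = 0 := by
  obtain ⟨q, hq⟩ := WithTop.ne_top_iff_exists.1 (w_ne_top wL (one_ne_zero : (1:L) ≠ 0))
  have h := wL.w_mul 1 1
  rw [one_mul, ← hq, ← WithTop.coe_add] at h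
  have h2 : q = q + q := by exact_mod_cast h
  have : q = 0 := by linarith
  rw [← hq, this]; rfl

lemma w_neg (x : L) : wL.w (-x) = wL.w x := by
  have h1 : wL.w (-1 : L) = 0 := by
    obtain ⟨q, hq⟩ := WithTop.ne_top_iff_exists.1 (w_ne_top wL (by norm_num : (-1:L) ≠ 0))
    have h := wL.w_mul (-1) (-1)
    rw [neg_mul_neg, one_mul, w_one, ← hq, ← WithTop.coe_add] at h
    have h2 : (0:ℚ) = q + q := by exact_mod_cast h
    have : q = 0 := by linarith
    rw [← hq, this]; rfl
  calc wL.w (-x) = wL.w ((-1) * x) := by ring_nf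
    _ = wL.w (-1) + wL.w x := wL.w_mul _ _
    _ = wL.w x := by rw [h1, zero_add]

lemma w_pow {x : L} {q : ℚ} (h : wL.w x = (q : WithTop ℚ)) (k : ℕ) :
    wL.w (x ^ k) = (((k : ℚ) * q : ℚ) : WithTop ℚ) := by
  induction k with
  | zero => simpa using w_one wL
  | succ m ih =>
      rw [pow_succ, wL.w_mul, ih, h, ← WithTop.coe_add]
      congr 1
      push_cast
      ring

lemma w_inv {x : L} {q : ℚ} (h : wL.w x = (q : WithTop ℚ)) :
    wL.w x⁻¹ = ((-q : ℚ) : WithTop ℚ) := by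
  have hx : x ≠ 0 := by
    intro h0; rw [h0, w_zero] at h; exact (WithTop.top_ne_coe h).elim
  obtain ⟨r, hr⟩ := WithTop.ne_top_iff_exists.1 (w_ne_top wL (inv_ne_zero hx))
  have hm := wL.w_mul x x⁻¹
  rw [mul_inv_cancel₀ hx, w_one, h, ← hr, ← WithTop.coe_add] at hm
  have h2 : (0:ℚ) = q + r := by exact_mod_cast hm
  have : r = -q := by linarith
  rw [← hr, this]

lemma w_zpow {x : L} {q : ℚ} (h : wL.w x = (q : WithTop ℚ)) (m : ℤ) :
    wL.w (x ^ m) = (((m : ℚ) * q : ℚ) : WithTop ℚ) := by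
  cases m with
  | ofNat k => rw [Int.ofNat_eq_coe, zpow_natCast, w_pow wL h k]; push_cast; ring_nf
  | negSucc k =>
      rw [zpow_negSucc]
      rw [w_inv wL (w_pow wL h (k+1))]
      congr 1
      push_cast
      ring

lemma w_add_eq_left {x y : L} (h : wL.w x < wL.w y) : wL.w (x + y) = wL.w x := by
  refine le_antisymm ?_ ?_
  · have h2 := wL.w_add (x + y) (-y)
    rw [add_neg_cancel_right, w_neg] at h2
    rcases min_cases (wL.w (x+y)) (wL.w y) with ⟨heq, _⟩ | ⟨heq, hle⟩
    · rw [heq] at h2; exact h2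
    · rw [heq] at h2; exact absurd (lt_of_lt_of_le h h2) (lt_irrefl _)
  · have := wL.w_add x y
    rwa [min_eq_left h.le] at this

lemma w_sum_gt {ι : Type*} [DecidableEq ι] (s : Finset ι) (f : ι → L) (c : WithTop ℚ) (hc : c ≠ ⊤)
    (h : ∀ i ∈ s, c < wL.w (f i)) : c < wL.w (∑ i ∈ s, f i) := by
  induction s using Finset.induction with
  | empty => simp [w_zero]; exact lt_top_iff_ne_top.2 hc
  | insert _ _ hnotmem ih =>
      rename_i a t
      rw [Finset.sum_insert hnotmem]
      have h1 : c < wL.w (f a) := h a (Finset.mem_insert_self a t)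
      have h2 : c < wL.w (∑ i ∈ t, f i) := ih (fun i hi => h i (Finset.mem_insert_of_mem hi))
      calc c < min (wL.w (f a)) (wL.w (∑ i ∈ t, f i)) := lt_min h1 h2
        _ ≤ _ := wL.w_add _ _

lemma w_sum_eq {ι : Type*} [DecidableEq ι] (s : Finset ι) (f : ι → L) (i₀ : ι) (h₀ : i₀ ∈ s)
    (hne : wL.w (f i₀) ≠ ⊤)
    (h : ∀ i ∈ s, i ≠ i₀ → wL.w (f i₀) < wL.w (f i)) :
    wL.w (∑ i ∈ s, f i) = wL.w (f i₀) := by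
  rw [← Finset.add_sum_erase s f h₀]
  refine w_add_eq_left wL ?_
  exact w_sum_gt wL _ _ _ hne (fun i hi =>
    h i (Finset.mem_of_mem_erase hi) (Finset.ne_of_mem_erase hi))

/-- Artin–Schreier valuation lemma. -/
lemma w_AS {p : ℕ} (hp : 1 < p) {y z : L} {q : ℚ} (hq : q < 0)
    (hy : y ^ p - y = z) (hz : wL.w z = (q : WithTop ℚ)) :
    wL.w y = ((q / p : ℚ) : WithTop ℚ) := by
  have hy0 : y ≠ 0 := by
    rintro rfl
    rw [zero_pow (by omega), sub_zero] at hy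
    rw [← hy, w_zero] at hz
    exact (WithTop.top_ne_coe hz).elim
  obtain ⟨r, hr⟩ := WithTop.ne_top_iff_exists.1 (w_ne_top wL hy0)
  have hpow : wL.w (y ^ p) = (((p:ℚ) * r : ℚ) : WithTop ℚ) := w_pow wL hr.symm p
  have hzeq : wL.w (y ^ p + (-y)) = (q : WithTop ℚ) := by
    rw [← sub_eq_add_neg, hy, hz]
  have hp0 : (1:ℚ) < p := by exact_mod_cast hp
  rcases lt_trichotomy r 0 with hr0 | hr0 | hr0
  · -- p*r < r, so w(y^p - y) = p*r = q
    have hlt : wL.w (y ^ p) < wL.w (-y) := by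
      rw [hpow, w_neg, ← hr, WithTop.coe_lt_coe]
      nlinarith [mul_neg_of_pos_of_neg (by linarith : (0:ℚ) < (p:ℚ)-1) hr0]
    have := w_add_eq_left wL hlt
    rw [hzeq, hpow] at this
    have hqr : q = (p:ℚ) * r := by exact_mod_cast this
    rw [← hr]
    congr 1
    field_simp [hqr]
    linarith
  · -- r = 0 : w(y^p - y) ≥ 0 > q, contradiction
    exfalso
    have h1 : (0 : WithTop ℚ) ≤ wL.w (y ^ p + (-y)) := by
      have := wL.w_add (y^p) (-y)
      rw [hpow, w_neg, ← hr, hr0] at this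
      simpa using this
    rw [hzeq] at h1
    have : (0:ℚ) ≤ q := by exact_mod_cast h1
    linarith
  · -- r > 0: w(-y) < w(y^p), so w = r = q, but then q > 0, contradiction
    exfalso
    have hlt : wL.w (-y) < wL.w (y ^ p) := by
      rw [hpow, w_neg, ← hr, WithTop.coe_lt_coe]
      nlinarith [mul_pos (by linarith : (0:ℚ) < (p:ℚ)-1) hr0]
    have := w_add_eq_left wL (x := -y) (y := y ^ p) hlt
    rw [add_comm] at hzeq
    rw [hzeq, w_neg, ← hr] at this
    have : q = r := by exact_mod_cast this
    linarith

lemma w_natCast (p : ℕ) [Fact p.Prime] [CharP L p] {m : ℕ} (h : (m : L) ≠ 0) :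
    wL.w (m : L) = (0 : WithTop ℚ) := by
  have hpm : ¬ p ∣ m := fun hd => h ((CharP.cast_eq_zero_iff L p m).2 hd)
  have hz : ((m : ZMod p)) ≠ 0 := by
    rwa [Ne, ZMod.natCast_eq_zero_iff]
  have : (m : ZMod p) ^ (p - 1) = 1 := ZMod.pow_card_sub_one_eq_one hz
  have hL : (m : L) ^ (p - 1) = 1 := by
    have := congrArg (ZMod.castHom (dvd_refl p) L) this
    rw [map_pow, map_one, map_natCast] at this
    exact this
  obtain ⟨q, hq⟩ := WithTop.ne_top_iff_exists.1 (w_ne_top wL h)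
  have := w_pow wL hq.symm (p - 1)
  rw [hL, w_one] at this
  have h0 : ((p-1 : ℕ):ℚ) * q = 0 := by exact_mod_cast this.symm
  have hp1 : ((p-1:ℕ):ℚ) ≠ 0 := Nat.cast_ne_zero.2 (by
    have := (Fact.out : p.Prime).one_lt; omega)
  have : q = 0 := by
    rcases mul_eq_zero.1 h0 with h | h
    · exact absurd h hp1
    · exact h
  rw [← hq, this]; rfl

end helpers

/-- For a length-2 Witt vector `η = (η₁, η₂)` with `v(η₁) < 0`, `v(η₁) < v(η₂)` and
`v(η₁) ∉ pℤ`, the degree-`p²` cyclic extension `K_η = K(x₁, x₂)` is totally ramified;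
in particular `v(x₂) ∈ (1/p²)ℤ \ (1/p)ℤ`. -/
theorem stmt7 (K L : Type*) [Field K] [Field L] [Algebra K L] (p : ℕ) [Fact p.Prime]
    [CharP K p] (vK : CompleteDiscreteValuation K) (wL : ExtValuation K L vK)
    (η₁ η₂ : K) (n : ℤ) (hv : vK.v η₁ = (n : WithTop ℤ)) (hneg : n < 0)
    (hlt : vK.v η₁ < vK.v η₂) (hnd : ¬ (p : ℤ) ∣ n)
    (x₁ x₂ : L) (hx₁ : x₁ ^ p - x₁ = algebraMap K L η₁)
    (hx₂ : x₂ ^ p - x₂ = algebraMap K L η₂ -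
      ∑ i ∈ Finset.Ioo 0 p, ((p.choose i / p : ℕ) : L) *
        algebraMap K L η₁ ^ i * x₁ ^ (p - i))
    (hgen : Algebra.adjoin K {x₁, x₂} = (⊤ : Subalgebra K L))
    (hdeg : Module.finrank K L = p ^ 2)
    [IsGalois K L] (hcyc : IsCyclic (L ≃ₐ[K] L)) :
    wL.TotallyRamified (p ^ 2) ∧
      ∃ s : ℤ, wL.w x₂ = (((s : ℚ) / ((p : ℚ) ^ 2) : ℚ) : WithTop ℚ) ∧
        ¬ (p : ℤ) ∣ s := by
  classical
  have hprime : p.Prime := Fact.out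
  have hp2 : 2 ≤ p := hprime.two_le
  have hpQ : (1:ℚ) < (p:ℚ) := by exact_mod_cast hprime.one_lt
  have hpQ0 : (0:ℚ) < (p:ℚ) := by positivity
  have hpQne : (p:ℚ) ≠ 0 := ne_of_gt hpQ0
  have hnQ : (n:ℚ) < 0 := by exact_mod_cast hneg
  have hp2Q : (2:ℚ) ≤ (p:ℚ) := by exact_mod_cast hp2
  haveI : CharP L p := charP_of_injective_algebraMap (algebraMap K L).injective p
  -- valuation of x₁
  have hwη₁ : wL.w (algebraMap K L η₁) = ((n:ℚ) : WithTop ℚ) := by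
    rw [wL.w_extends, hv, WithTop.map_coe]
  have hwx₁ : wL.w x₁ = (((n:ℚ) / p : ℚ) : WithTop ℚ) :=
    w_AS wL hprime.one_lt hnQ hx₁ hwη₁
  -- the right hand side for x₂
  set F : ℕ → L := fun i => ((p.choose i / p : ℕ) : L) *
      algebraMap K L η₁ ^ i * x₁ ^ (p - i) with hF
  set c : ℚ := ((p:ℚ) - 1) * n + n / p with hc
  have hc0 : c < 0 := by
    rw [hc]
    have : ((p:ℚ) - 1) * n < 0 := mul_neg_of_pos_of_neg (by linarith) hnQ
    have : (n:ℚ)/p < 0 := div_neg_of_neg_of_pos hnQ hpQ0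
    linarith
  have hcn : c < (n:ℚ) := by
    rw [hc]
    have h1 : ((p:ℚ) - 2) * n ≤ 0 := mul_nonpos_of_nonneg_of_nonpos (by linarith) hnQ.le
    have h2 : (n:ℚ)/p < 0 := div_neg_of_neg_of_pos hnQ hpQ0
    nlinarith
  -- valuation of the leading term F (p-1)
  have hFp1 : F (p-1) = algebraMap K L η₁ ^ (p-1) * x₁ := by
    have h1 : p.choose (p-1) = p := by
      rw [Nat.choose_symm (by omega : 1 ≤ p), Nat.choose_one_right]
    rw [hF]
    simp only [h1, Nat.div_self (by omega : 0 < p), Nat.cast_one, one_mul,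
      (by omega : p - (p-1) = 1), pow_one]
  have hwFp1 : wL.w (F (p-1)) = (c : WithTop ℚ) := by
    rw [hFp1, wL.w_mul, w_pow wL hwη₁ (p-1), hwx₁, ← WithTop.coe_add]
    congr 1
    rw [hc]
    push_cast [Nat.cast_sub (by omega : 1 ≤ p)]
    ring
  -- each other term has valuation > c
  have hother : ∀ i ∈ Finset.Ioo 0 (p-1), (c : WithTop ℚ) < wL.w (-F i) := by
    intro i hi
    rw [Finset.mem_Ioo] at hi
    rw [w_neg]
    by_cases hco : ((p.choose i / p : ℕ) : L) = 0
    · rw [hF]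
      simp only [hco, zero_mul]
      rw [w_zero]
      exact WithTop.coe_lt_top c
    · rw [hF]
      simp only []
      rw [wL.w_mul, wL.w_mul, w_natCast wL p hco, w_pow wL hwη₁ i, w_pow wL hwx₁ (p - i),
        zero_add, ← WithTop.coe_add, WithTop.coe_lt_coe]
      have hi1 : (1:ℚ) ≤ (i:ℚ) := by exact_mod_cast hi.1
      have hi2 : (i:ℚ) ≤ (p:ℚ) - 2 := by
        have : i ≤ p - 2 := by omega
        have := (Nat.cast_le (α := ℚ)).2 this
        rw [Nat.cast_sub (by omega : 2 ≤ p)] at this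
        push_cast at this
        linarith
      have hpi : ((p - i : ℕ) : ℚ) = (p:ℚ) - i := by
        rw [Nat.cast_sub (by omega : i ≤ p)]
      rw [hpi, hc]
      have key : ((p:ℚ)-1)*n*p + n < (i:ℚ)*n*p + ((p:ℚ)-i)*n := by
        nlinarith [mul_pos (mul_pos (neg_pos.2 hnQ) (by linarith : (0:ℚ) < (p:ℚ)-1))
          (by linarith : (0:ℚ) < (p:ℚ)-1-i)]
      have e1 : ((p:ℚ)-1)*n + n/p = (((p:ℚ)-1)*n*p + n)/p := by field_simp
      have e2 : (i:ℚ)*n + ((p:ℚ)-(i:ℚ))*(n/p) = ((i:ℚ)*n*p + ((p:ℚ)-i)*n)/p := by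
        field_simp
      rw [e1, e2]
      exact (div_lt_div_iff_of_pos_right hpQ0).2 key
  -- split the sum
  have hsplitIoo : Finset.Ioo 0 p = insert (p-1) (Finset.Ioo 0 (p-1)) := by
    ext j; simp only [Finset.mem_Ioo, Finset.mem_insert]; omega
  have hnotmem : (p-1) ∉ Finset.Ioo 0 (p-1) := by simp
  have hwη₂ : (c : WithTop ℚ) < wL.w (algebraMap K L η₂) := by
    rw [wL.w_extends]
    rcases eq_or_ne (vK.v η₂) ⊤ with h | h
    · rw [h, WithTop.map_top]; exact WithTop.coe_lt_top c
    · obtain ⟨m, hm⟩ := WithTop.ne_top_iff_exists.1 h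
      rw [← hm, WithTop.map_coe, WithTop.coe_lt_coe]
      have hmn : n < m := by
        rw [hv, ← hm] at hlt; exact_mod_cast hlt
      have : (n:ℚ) < (m:ℚ) := by exact_mod_cast hmn
      linarith
  have hR : wL.w ((algebraMap K L) η₂ - (Finset.Ioo 0 p).sum F) = (c : WithTop ℚ) := by
    have hsum : (Finset.Ioo 0 p).sum F = F (p-1) + (Finset.Ioo 0 (p-1)).sum F := by
      rw [hsplitIoo, Finset.sum_insert hnotmem]
    have hnegsum : ∑ i ∈ Finset.Ioo 0 (p-1), -F i = -(Finset.Ioo 0 (p-1)).sum F := by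
      simp
    have hrw : (algebraMap K L) η₂ - (Finset.Ioo 0 p).sum F
        = -(F (p-1)) + ((algebraMap K L) η₂ + ∑ i ∈ Finset.Ioo 0 (p-1), -F i) := by
      rw [hnegsum, hsum]; ring
    rw [hrw]
    have h2 : (c : WithTop ℚ) < wL.w ((algebraMap K L) η₂ + ∑ i ∈ Finset.Ioo 0 (p-1), -F i) :=
      calc (c : WithTop ℚ)
          < min (wL.w ((algebraMap K L) η₂)) (wL.w (∑ i ∈ Finset.Ioo 0 (p-1), -F i)) :=
            lt_min hwη₂ (w_sum_gt wL _ _ _ (WithTop.coe_ne_top) hother)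
        _ ≤ _ := wL.w_add _ _
    rw [w_add_eq_left wL (by rw [w_neg, hwFp1]; exact h2), w_neg, hwFp1]
  have hwx₂ : wL.w x₂ = ((c / p : ℚ) : WithTop ℚ) := w_AS wL hprime.one_lt hc0 hx₂ hR
  set s : ℤ := n * ((p:ℤ)^2 - p + 1) with hsdef
  have hsQ : (c / (p:ℚ) : ℚ) = (s:ℚ)/(p:ℚ)^2 := by
    rw [hc, hsdef]; push_cast; field_simp
  have hwx₂' : wL.w x₂ = (((s:ℚ)/(p:ℚ)^2 : ℚ) : WithTop ℚ) := by rw [hwx₂, hsQ]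
  have hpZ : Prime (p:ℤ) := Nat.prime_iff_prime_int.mp hprime
  have hps : ¬ (p:ℤ) ∣ s := by
    intro hdvd
    rw [hsdef] at hdvd
    rcases Int.Prime.dvd_mul' hprime hdvd with h | h
    · exact hnd h
    · have h1 : (p:ℤ)^2 - p + 1 = p * ((p:ℤ)-1) + 1 := by ring
      rw [h1] at h
      have h2 : (p:ℤ) ∣ 1 := (dvd_add_right ⟨(p:ℤ)-1, rfl⟩).mp h
      have := Int.le_of_dvd one_pos h2
      omega
  -- the uniformizer of L
  have hcop : IsCoprime ((p:ℤ)^2) s := (hpZ.coprime_iff_not_dvd.2 hps).pow_left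
  obtain ⟨u, v', huv⟩ := hcop
  obtain ⟨π, hπ⟩ := vK.v_surj 1
  have hwπ : wL.w (algebraMap K L π) = ((1:ℚ) : WithTop ℚ) := by
    rw [wL.w_extends, hπ, WithTop.map_coe]; norm_num
  have hexist : wL.w ((algebraMap K L π) ^ u * x₂ ^ v')
      = (((1:ℚ)/(p:ℚ)^2 : ℚ) : WithTop ℚ) := by
    rw [wL.w_mul, w_zpow wL hwπ u, w_zpow wL hwx₂' v', ← WithTop.coe_add]
    congr 1
    have huvQ : (u:ℚ) * (p:ℚ)^2 + (v':ℚ) * (s:ℚ) = 1 := by exact_mod_cast huv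
    have e : (u:ℚ) * 1 + (v':ℚ) * ((s:ℚ)/(p:ℚ)^2)
        = ((u:ℚ)*(p:ℚ)^2 + (v':ℚ)*(s:ℚ))/(p:ℚ)^2 := by
      field_simp
    rw [e, huvQ]
  -- span argument
  have hp0 : 0 < p := by omega
  haveI : NeZero p := ⟨by omega⟩
  set M : Fin p × Fin p → L := fun ij => x₁ ^ (ij.1 : ℕ) * x₂ ^ (ij.2 : ℕ) with hM
  set S : Submodule K L := Submodule.span K (Set.range M) with hS
  have hx1p : x₁ ^ p = algebraMap K L η₁ + x₁ := by rw [← hx₁]; ring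
  have hx2p : x₂ ^ p = ((algebraMap K L) η₂ - (Finset.Ioo 0 p).sum F) + x₂ := by
    rw [← hx₂]; ring
  have G : ∀ a b : ℕ, b < p → x₁ ^ a * x₂ ^ b ∈ S := by
    intro a
    induction a using Nat.strong_induction_on with
    | _ a ih =>
      intro b hb
      by_cases ha : a < p
      · exact Submodule.subset_span ⟨(⟨a, ha⟩, ⟨b, hb⟩), rfl⟩
      · push_neg at ha
        have hsplit2 : x₁ ^ a * x₂ ^ b
            = x₁ ^ (a - p + 1) * x₂ ^ b + η₁ • (x₁ ^ (a - p) * x₂ ^ b) := by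
          rw [Algebra.smul_def]
          have h1 : x₁ ^ a = x₁ ^ (a - p) * x₁ ^ p := by
            rw [← pow_add]; congr 1; omega
          rw [h1, hx1p, pow_succ]
          ring
        rw [hsplit2]
        exact S.add_mem (ih (a - p + 1) (by omega) b hb)
          (S.smul_mem _ (ih (a - p) (by omega) b hb))
  have h1S : (1:L) ∈ S := by simpa using G 0 0 hp0
  have key₁ : ∀ z ∈ S, x₁ * z ∈ S := by
    intro z hz
    have hle : S ≤ Submodule.comap (LinearMap.mulLeft K x₁) S := by
      rw [hS, Submodule.span_le]
      rintro _ ⟨ij, rfl⟩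
      simp only [SetLike.mem_coe, Submodule.mem_comap, LinearMap.mulLeft_apply, hM]
      have h1 : x₁ * (x₁ ^ (ij.1:ℕ) * x₂ ^ (ij.2:ℕ))
          = x₁ ^ ((ij.1:ℕ)+1) * x₂ ^ (ij.2:ℕ) := by ring
      rw [h1]
      exact G _ _ ij.2.isLt
    exact hle hz
  have key₂ : ∀ z ∈ S, x₂ * z ∈ S := by
    intro z hz
    have hle : S ≤ Submodule.comap (LinearMap.mulLeft K x₂) S := by
      rw [hS, Submodule.span_le]
      rintro _ ⟨ij, rfl⟩
      simp only [SetLike.mem_coe, Submodule.mem_comap, LinearMap.mulLeft_apply, hM]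
      by_cases hj : (ij.2:ℕ) + 1 < p
      · have h1 : x₂ * (x₁ ^ (ij.1:ℕ) * x₂ ^ (ij.2:ℕ))
            = x₁ ^ (ij.1:ℕ) * x₂ ^ ((ij.2:ℕ)+1) := by ring
        rw [h1]
        exact G _ _ hj
      · have hj2 : (ij.2:ℕ) + 1 = p := by have := ij.2.isLt; omega
        have e : x₂ * (x₁ ^ (ij.1:ℕ) * x₂ ^ (ij.2:ℕ))
            = x₁ ^ (ij.1:ℕ) * x₂ ^ ((ij.2:ℕ)+1) := by ring
        rw [e, hj2, hx2p]
        have e2 : x₁ ^ (ij.1:ℕ) * (((algebraMap K L) η₂ - (Finset.Ioo 0 p).sum F) + x₂)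
            = (η₂ • x₁ ^ (ij.1:ℕ) + x₁ ^ (ij.1:ℕ) * x₂)
              - ∑ k ∈ Finset.Ioo 0 p, x₁ ^ (ij.1:ℕ) * F k := by
          rw [Algebra.smul_def, ← Finset.mul_sum]
          ring
        rw [e2]
        refine S.sub_mem (S.add_mem (S.smul_mem _ (by simpa using G (ij.1:ℕ) 0 hp0))
          (by simpa using G (ij.1:ℕ) 1 (by omega))) (Submodule.sum_mem S ?_)
        intro k hk
        have e3 : x₁ ^ (ij.1:ℕ) * F k
            = (((p.choose k / p : ℕ) : K) * η₁ ^ k) • x₁ ^ (p - k + (ij.1:ℕ)) := by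
          rw [hF]
          simp only [Algebra.smul_def, map_mul, map_pow, map_natCast]
          rw [pow_add]
          ring
        rw [e3]
        exact S.smul_mem _ (by simpa using G (p - k + (ij.1:ℕ)) 0 hp0)
    exact hle hz
  have hSall : ∀ y : L, y ∈ S := by
    let A : Subalgebra K L :=
      { carrier := {y : L | ∀ z ∈ S, y * z ∈ S}
        mul_mem' := by
          intro a b ha hb z hz
          rw [mul_assoc]; exact ha _ (hb _ hz)
        one_mem' := by intro z hz; rw [one_mul]; exact hz
        add_mem' := by
          intro a b ha hb z hz
          rw [add_mul]; exact S.add_mem (ha z hz) (hb z hz)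
        zero_mem' := by intro z hz; rw [zero_mul]; exact S.zero_mem
        algebraMap_mem' := by
          intro r z hz
          rw [← Algebra.smul_def]
          exact S.smul_mem r hz }
    have hsub : Algebra.adjoin K {x₁, x₂} ≤ A := by
      rw [Algebra.adjoin_le_iff]
      intro y hy
      rcases hy with rfl | hy
      · exact key₁
      · rw [Set.mem_singleton_iff] at hy
        subst hy
        exact key₂
    intro y
    have hy : y ∈ A := by
      apply hsub; rw [hgen]; trivial
    have hy' : ∀ z ∈ S, y * z ∈ S := hy
    simpa using hy' 1 h1S
  -- injectivity of the candidate values modulo ℤ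
  have hinj : ∀ (m m' : ℤ) (ij ij' : Fin p × Fin p),
      ((m:ℚ) + ((ij.1:ℕ):ℚ) * ((n:ℚ)/(p:ℚ)) + ((ij.2:ℕ):ℚ) * ((s:ℚ)/(p:ℚ)^2)
        = (m':ℚ) + ((ij'.1:ℕ):ℚ) * ((n:ℚ)/(p:ℚ)) + ((ij'.2:ℕ):ℚ) * ((s:ℚ)/(p:ℚ)^2)) →
      ij = ij' := by
    intro m m' ij ij' h
    have hp2ne : ((p:ℚ)^2 : ℚ) ≠ 0 := pow_ne_zero 2 hpQne
    have e : ∀ (m a b : ℚ), m + a*((n:ℚ)/(p:ℚ)) + b*((s:ℚ)/(p:ℚ)^2)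
        = (m*(p:ℚ)^2 + a*(n:ℚ)*(p:ℚ) + b*(s:ℚ))/(p:ℚ)^2 := by
      intro m a b; field_simp
    rw [e, e, div_eq_div_iff hp2ne hp2ne] at h
    have h2' := mul_right_cancel₀ hp2ne h
    have h3 : (m * p^2 + ((ij.1:ℕ):ℤ) * n * p + ((ij.2:ℕ):ℤ) * s : ℤ)
        = m' * p^2 + ((ij'.1:ℕ):ℤ) * n * p + ((ij'.2:ℕ):ℤ) * s := by exact_mod_cast h2'

    have hj : ((ij.2:ℕ) : ℤ) = ((ij'.2:ℕ) : ℤ) := by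
      have hd : (p:ℤ) ∣ (((ij.2:ℕ):ℤ) - ((ij'.2:ℕ):ℤ)) * s :=
        ⟨(m' - m) * p + (((ij'.1:ℕ):ℤ) - ((ij.1:ℕ):ℤ)) * n, by linear_combination h3⟩
      rcases Int.Prime.dvd_mul' hprime hd with h' | h'
      · have hb1 : (((ij.2:ℕ)):ℤ) < p := by exact_mod_cast ij.2.isLt
        have hb2 : (((ij'.2:ℕ)):ℤ) < p := by exact_mod_cast ij'.2.isLt
        have hb3 : (0:ℤ) ≤ ((ij.2:ℕ):ℤ) := by positivity
        have hb4 : (0:ℤ) ≤ ((ij'.2:ℕ):ℤ) := by positivity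
        have := Int.eq_zero_of_abs_lt_dvd h'
          (by rw [abs_sub_lt_iff]; constructor <;> omega)
        omega
      · exact absurd h' hps
    have hi : ((ij.1:ℕ) : ℤ) = ((ij'.1:ℕ) : ℤ) := by
      have h4 : (m * p + ((ij.1:ℕ):ℤ) * n) * p = (m' * p + ((ij'.1:ℕ):ℤ) * n) * p := by
        linear_combination h3 - s * hj
      have hpne : (p:ℤ) ≠ 0 := by positivity
      have h5 : m * p + ((ij.1:ℕ):ℤ) * n = m' * p + ((ij'.1:ℕ):ℤ) * n :=
        mul_right_cancel₀ hpne h4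
      have hd : (p:ℤ) ∣ (((ij.1:ℕ):ℤ) - ((ij'.1:ℕ):ℤ)) * n :=
        ⟨m' - m, by linear_combination h5⟩
      rcases Int.Prime.dvd_mul' hprime hd with h' | h'
      · have hb1 : (((ij.1:ℕ)):ℤ) < p := by exact_mod_cast ij.1.isLt
        have hb2 : (((ij'.1:ℕ)):ℤ) < p := by exact_mod_cast ij'.1.isLt
        have hb3 : (0:ℤ) ≤ ((ij.1:ℕ):ℤ) := by positivity
        have hb4 : (0:ℤ) ≤ ((ij'.1:ℕ):ℤ) := by positivity
        have := Int.eq_zero_of_abs_lt_dvd h'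
          (by rw [abs_sub_lt_iff]; constructor <;> omega)
        omega
      · exact absurd h' hnd
    have hi' : (ij.1:ℕ) = (ij'.1:ℕ) := by exact_mod_cast hi
    have hj' : (ij.2:ℕ) = (ij'.2:ℕ) := by exact_mod_cast hj
    exact Prod.ext (Fin.ext hi') (Fin.ext hj')
  -- value of a single basis term
  have hwf : ∀ ij : Fin p × Fin p, ∀ cf : K, cf ≠ 0 → ∃ m : ℤ,
      wL.w (cf • M ij) = (((m:ℚ) + ((ij.1:ℕ):ℚ) * ((n:ℚ)/(p:ℚ))
        + ((ij.2:ℕ):ℚ) * ((s:ℚ)/(p:ℚ)^2) : ℚ) : WithTop ℚ) := by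
    intro ij cf hcf
    obtain ⟨m, hm⟩ := WithTop.ne_top_iff_exists.1
      (fun ht => hcf ((vK.v_eq_top_iff cf).1 ht))
    refine ⟨m, ?_⟩
    rw [Algebra.smul_def, wL.w_mul, wL.w_extends, ← hm, WithTop.map_coe]
    simp only [hM]
    rw [wL.w_mul, w_pow wL hwx₁, w_pow wL hwx₂', ← WithTop.coe_add, ← WithTop.coe_add]
    congr 1
    push_cast
    ring
  refine ⟨⟨?_, ⟨(algebraMap K L π) ^ u * x₂ ^ v', ?_⟩⟩, s, ?_, hps⟩
  · -- all values lie in (1/p²)ℤ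
    intro x hx
    have hxS := hSall x
    rw [hS] at hxS
    obtain ⟨cf, hcf⟩ := (Submodule.mem_span_range_iff_exists_fun K).1 hxS
    have hnonempty : (Finset.univ : Finset (Fin p × Fin p)).Nonempty := Finset.univ_nonempty
    obtain ⟨i₀, -, hmin⟩ := Finset.exists_min_image Finset.univ
      (fun ij => wL.w (cf ij • M ij)) hnonempty
    have hne0 : wL.w (cf i₀ • M i₀) ≠ ⊤ := by
      intro ht
      apply hx
      rw [← hcf]
      apply Finset.sum_eq_zero
      intro ij _
      have htop : wL.w (cf ij • M ij) = ⊤ :=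
        top_le_iff.1 (ht ▸ hmin ij (Finset.mem_univ ij))
      exact (wL.w_eq_top_iff _).1 htop
    have hcf0 : cf i₀ ≠ 0 := by
      intro h0; apply hne0; rw [h0, zero_smul]; exact w_zero wL
    obtain ⟨m₀, hm₀⟩ := hwf i₀ (cf i₀) hcf0
    have hstrict : ∀ ij ∈ (Finset.univ : Finset (Fin p × Fin p)), ij ≠ i₀ →
        wL.w (cf i₀ • M i₀) < wL.w (cf ij • M ij) := by
      intro ij _ hne'
      rcases (hmin ij (Finset.mem_univ ij)).lt_or_eq with h | h
      · exact h
      · exfalso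
        have hcfij : cf ij ≠ 0 := by
          intro h0
          rw [h0, zero_smul, w_zero wL] at h
          exact hne0 h
        obtain ⟨m, hm⟩ := hwf ij (cf ij) hcfij
        rw [hm₀, hm] at h
        have heq : ((m₀:ℚ) + ((i₀.1:ℕ):ℚ) * ((n:ℚ)/(p:ℚ)) + ((i₀.2:ℕ):ℚ) * ((s:ℚ)/(p:ℚ)^2)
            = (m:ℚ) + ((ij.1:ℕ):ℚ) * ((n:ℚ)/(p:ℚ)) + ((ij.2:ℕ):ℚ) * ((s:ℚ)/(p:ℚ)^2)) := by
          exact_mod_cast h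
        exact hne' (hinj m₀ m i₀ ij heq).symm
    have hval := w_sum_eq wL Finset.univ (fun ij => cf ij • M ij) i₀
      (Finset.mem_univ i₀) hne0 hstrict
    rw [hcf] at hval
    refine ⟨m₀ * p^2 + ((i₀.1:ℕ):ℤ) * n * p + ((i₀.2:ℕ):ℤ) * s, ?_⟩
    rw [hval, hm₀]
    congr 1
    push_cast
    field_simp
  · rw [hexist]
    congr 1
  · exact hwx₂'
end

section
/- Let A = [ω, b)_K be the degree-p cyclic algebra over a field K of characteristic p > 0, generated by x, y with x^p - x = ω, y^p = b, yxy^{-1} = x + 1. Then the element z = x + y satisfies z^p - z = ω + b. -/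
open Finset
theorem Salt (k : ℕ) : ∑ i ∈ range (k+1), ((-1:ℤ)^(k-i) * (k.choose i))
    = if k = 0 then 1 else 0 := by
  have hcg : ∀ i ∈ range (k+1), ((-1:ℤ)^(k-i) * (k.choose i))
      = (-1)^k * ((-1)^i * (k.choose i)) := by
    intro i hi
    have hik : i ≤ k := Nat.lt_succ_iff.mp (Finset.mem_range.mp hi)
    have h1 : (-1:ℤ)^(k-i) * (-1)^i = (-1)^k := by
      rw [← pow_add, Nat.sub_add_cancel hik]
    have h2 : ((-1:ℤ)^i) * ((-1)^i) = 1 := by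
      rw [← pow_add, ← two_mul, pow_mul]; norm_num
    calc ((-1:ℤ)^(k-i) * (k.choose i))
        = ((-1:ℤ)^(k-i) * (-1)^i) * (-1)^i * (k.choose i) := by
          rw [mul_assoc ((-1:ℤ)^(k-i)), h2, mul_one]
      _ = (-1)^k * ((-1)^i * (k.choose i)) := by rw [h1, mul_assoc]
  rw [Finset.sum_congr rfl hcg, ← Finset.mul_sum, Int.alternating_sum_range_choose]
  by_cases hk : k = 0 <;> simp [hk]


section
variable {A : Type*} [Ring A]

noncomputable def cc (x : A) : ℕ → ℕ → ℕ → A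
  | 0, 0, _ => 1
  | 0, _+1, _ => 0
  | n+1, 0, s => (x + (s:A)) * cc x n 0 s
  | n+1, k+1, s => (x + (s:A)) * cc x n (k+1) s + cc x n k (s+1)

theorem cc_gt (x : A) : ∀ n k s, n < k → cc x n k s = 0 := by
  intro n
  induction n with
  | zero => intro k s h; match k, h with | k+1, _ => rfl
  | succ n ih =>
    intro k s h
    match k, h with
    | k+1, h =>
      rw [cc, ih _ _ (by omega), ih _ _ (by omega), mul_zero, add_zero]

theorem cc_diag (x : A) : ∀ n s, cc x n n s = 1 := by
  intro n
  induction n with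
  | zero => intro s; rfl
  | succ n ih => intro s; rw [cc, cc_gt _ _ _ _ (by omega), mul_zero, zero_add, ih]

theorem cc_left (x : A) : ∀ n s, cc x n 0 s = (x + (s:A))^n := by
  intro n
  induction n with
  | zero => intro s; simp [cc]
  | succ n ih => intro s; rw [cc, ih, pow_succ']
end
section
variable {A : Type*} [Ring A] {x y : A} (h : y * x = x * y + y)
include h

theorem y_cc : ∀ n k s, y * cc x n k s = cc x n k (s+1) * y := by
  intro n
  induction n with
  | zero =>
    intro k s
    match k with
    | 0 => simp [cc]
    | k+1 => simp [cc]
  | succ n ih =>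
    intro k s
    have hy : y * (x + (s:A)) = (x + ((s+1:ℕ):A)) * y := by
      rw [mul_add, h, ← (Nat.cast_commute (s:ℕ) y).eq]
      push_cast
      noncomm_ring
    match k with
    | 0 =>
      rw [cc, ← mul_assoc, hy, mul_assoc, ih, ← mul_assoc]; rfl
    | k+1 =>
      rw [cc, mul_add, ← mul_assoc, hy, mul_assoc, ih, ih, ← mul_assoc, ← add_mul]; rfl

theorem expand_pow : ∀ n, (x + y)^n = ∑ k ∈ range (n+1), cc x n k 0 * y^k := by
  intro n
  induction n with
  | zero => simp [cc]
  | succ n ih =>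
    rw [pow_succ', ih, Finset.mul_sum]
    have step : ∀ k, (x + y) * (cc x n k 0 * y^k)
        = x * (cc x n k 0 * y^k) + cc x n k 1 * y^(k+1) := by
      intro k
      rw [add_mul, ← mul_assoc y, y_cc h]
      simp only [zero_add, mul_assoc, ← pow_succ']
    rw [Finset.sum_congr rfl (fun k _ => step k), Finset.sum_add_distrib]
    rw [Finset.sum_range_succ' _ (n+1)]
    have hrec : ∀ k, cc x (n+1) (k+1) 0 * y^(k+1)
        = x * (cc x n (k+1) 0 * y^(k+1)) + cc x n k 1 * y^(k+1) := by
      intro k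
      rw [show cc x (n+1) (k+1) 0 = (x + ((0:ℕ):A)) * cc x n (k+1) 0 + cc x n k 1 from rfl]
      push_cast
      rw [add_zero, add_mul, mul_assoc]
    rw [Finset.sum_congr rfl (fun k _ => hrec k), Finset.sum_add_distrib]
    have h0 : cc x (n+1) 0 0 * y^0 = x * (cc x n 0 0 * y ^ 0) := by
      rw [show cc x (n+1) 0 0 = (x + ((0:ℕ):A)) * cc x n 0 0 from rfl]
      push_cast; rw [add_zero, mul_assoc]
    rw [h0]
    have e1 : (∑ k ∈ range (n+1), x * (cc x n (k+1) 0 * y^(k+1))) + x * (cc x n 0 0 * y^0)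
        = ∑ k ∈ range (n+1), x * (cc x n k 0 * y^k) := by
      rw [← Finset.sum_range_succ' (fun k => x * (cc x n k 0 * y^k)) (n+1),
        Finset.sum_range_succ, cc_gt x n (n+1) 0 (by omega)]
      simp
    rw [add_right_comm, e1]

end
section
variable {A : Type*} [Ring A]

theorem cc_factorial (x : A) : ∀ n k s,
    (k.factorial : ℤ) • cc x n k s
      = ∑ i ∈ range (k+1), ((-1:ℤ)^(k-i) * (k.choose i)) • (x + ((s+i : ℕ) : A))^n := by
  intro n
  induction n with
  | zero =>
    intro k s
    match k with
    | 0 => simp [cc]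
    | k+1 =>
      have hcg : ∀ i ∈ range (k+2), ((-1:ℤ)^(k+1-i) * ((k+1).choose i)) • (x + ((s+i:ℕ):A))^0
          = ((-1:ℤ)^(k+1-i) * ((k+1).choose i)) • (1:A) := by intro i _; rw [pow_zero]
      rw [Finset.sum_congr rfl hcg, ← Finset.sum_smul, Salt]
      simp [cc]
  | succ n ih =>
    intro k s
    match k with
    | 0 =>
      simp [cc_left]
    | k+1 =>
      have key : ∀ i ∈ range (k+2), ((-1:ℤ)^(k+1-i) * ((k+1).choose i)) • (x + ((s+i:ℕ):A))^(n+1)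
          = (x + (s:A)) * (((-1:ℤ)^(k+1-i) * ((k+1).choose i)) • (x + ((s+i:ℕ):A))^n)
            + ((-1:ℤ)^(k+1-i) * ((k+1).choose i) * i) • (x + ((s+i:ℕ):A))^n := by
        intro i _
        have hx : (x + ((s+i:ℕ):A))^(n+1)
            = (x + (s:A)) * (x + ((s+i:ℕ):A))^n + (i:A) * (x + ((s+i:ℕ):A))^n := by
          rw [pow_succ', Nat.cast_add, ← add_assoc, add_mul]
        rw [hx, smul_add, ← mul_smul_comm]
        congr 1
        simp only [mul_smul, zsmul_eq_mul, Int.cast_natCast]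
      rw [Finset.sum_congr rfl key, Finset.sum_add_distrib, ← Finset.mul_sum]
      rw [show cc x (n+1) (k+1) s = (x + (s:A)) * cc x n (k+1) s + cc x n k (s+1) from rfl]
      rw [smul_add, ← mul_smul_comm, ih (k+1) s]
      congr 1
      -- remaining: ((k+1)! : ℤ) • cc x n k (s+1) = ∑ i ∈ range (k+2), (e_i * i) • (x+(s+i))^n
      rw [show ((k+1).factorial : ℤ) = ((k+1) : ℤ) * (k.factorial : ℤ) by
        rw [Nat.factorial_succ]; push_cast; ring]
      rw [← smul_smul, ih k (s+1)]
      rw [Finset.sum_range_succ' _ (k+1)]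
      simp only [Nat.cast_zero, mul_zero, zero_smul, add_zero]
      rw [Finset.smul_sum]
      refine Finset.sum_congr rfl ?_
      intro j hj
      rw [smul_smul]
      have hidx : s + 1 + j = s + (j + 1) := by omega
      rw [hidx]
      congr 1
      have hch : ((k+1).choose (j+1)) * (j+1) = (k+1) * (k.choose j) :=
        (Nat.add_one_mul_choose_eq k j).symm
      have hchZ : (((k+1).choose (j+1) : ℤ)) * ((j:ℤ)+1) = ((k:ℤ)+1) * (k.choose j) := by
        exact_mod_cast congrArg (Nat.cast : ℕ → ℤ) hch
      rw [Nat.succ_sub_succ]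
      push_cast
      linear_combination (-(-1:ℤ)^(k-j)) * hchZ
end

theorem Talt (m : ℕ) : ∑ i ∈ range (m+2), ((-1:ℤ)^(m+1-i) * ((m+1).choose i) * i)
    = if m = 0 then 1 else 0 := by
  rw [Finset.sum_range_succ' _ (m+1)]
  simp only [Nat.cast_add, Nat.cast_one, Nat.cast_zero, mul_zero, add_zero]
  have hterm : ∀ j ∈ range (m+1), ((-1:ℤ)^(m+1-(j+1)) * ((m+1).choose (j+1)) * (j+1))
      = ((m:ℤ)+1) * ((-1)^(m-j) * (m.choose j)) := by
    intro j _
    have hch : ((m+1).choose (j+1)) * (j+1) = (m+1) * (m.choose j) :=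
      (Nat.add_one_mul_choose_eq m j).symm
    have hchZ : (((m+1).choose (j+1) : ℤ)) * ((j:ℤ)+1) = ((m:ℤ)+1) * (m.choose j) := by
      exact_mod_cast congrArg (Nat.cast : ℕ → ℤ) hch
    rw [Nat.succ_sub_succ]
    linear_combination ((-1:ℤ)^(m-j)) * hchZ
  rw [Finset.sum_congr rfl hterm, ← Finset.mul_sum, Salt]
  by_cases hm : m = 0 <;> simp [hm]

section KeyLemma

theorem key_identity (K : Type*) [Field K] {A : Type*} [Ring A] [Algebra K A]
    (p : ℕ) [Fact p.Prime] [CharP K p] (x y : A) (h : y * x = x * y + y) :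
    (x + y)^p = x^p + y^p + y := by
  rcases subsingleton_or_nontrivial A with hA | hA
  · exact Subsingleton.elim _ _
  haveI : CharP A p := charP_of_injective_algebraMap (algebraMap K A).injective p
  haveI : ExpChar A p := ExpChar.prime (Fact.out : p.Prime)
  have hfermat : ∀ m : ℕ, ((m:A))^p = (m:A) := by
    intro m
    calc ((m:A))^p = (ZMod.castHom (dvd_refl p) A (m : ZMod p))^p := by rw [map_natCast]
      _ = (ZMod.castHom (dvd_refl p) A) ((m : ZMod p)^p) := (map_pow _ _ _).symm
      _ = (ZMod.castHom (dvd_refl p) A) (m : ZMod p) := by rw [ZMod.pow_card]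
      _ = (m:A) := map_natCast _ _
  have hterm : ∀ m : ℕ, (x + (m:A))^p = x^p + (m:A) := by
    intro m
    rw [add_pow_char_of_commute p ((Nat.cast_commute m x).symm), hfermat]
  -- values of cc x p k 0
  have c0 : cc x p 0 0 = x^p := by rw [cc_left]; norm_num
  have cp : cc x p p 0 = 1 := cc_diag x p 0
  have c1 : cc x p 1 0 = 1 := by
    have h1 := cc_factorial x p 1 0
    simp only [Finset.sum_range_succ, Finset.sum_range_zero, zero_add, hterm,
      Nat.factorial_one, Nat.cast_one, one_smul, Nat.choose_self, Nat.choose_zero_right,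
      Nat.sub_zero, pow_one, pow_zero, one_mul, mul_one, neg_smul, Nat.cast_zero,
      Nat.sub_self, neg_one_mul] at h1
    rw [h1]; push_cast; abel
  have cmid : ∀ k, 2 ≤ k → k < p → cc x p k 0 = 0 := by
    intro k hk2 hkp
    have hf := cc_factorial x p k 0
    have hsplit : ∀ i ∈ range (k+1), ((-1:ℤ)^(k-i) * (k.choose i)) • (x + ((0+i:ℕ):A))^p
        = ((-1:ℤ)^(k-i) * (k.choose i)) • x^p + ((-1:ℤ)^(k-i) * (k.choose i) * i) • (1:A) := by
      intro i _
      rw [hterm, smul_add]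
      congr 1
      simp only [Nat.zero_add, mul_smul, zsmul_eq_mul, Int.cast_natCast, mul_one]
    rw [Finset.sum_congr rfl hsplit, Finset.sum_add_distrib, ← Finset.sum_smul,
      ← Finset.sum_smul, Salt] at hf
    obtain ⟨m, rfl⟩ : ∃ m, k = m + 2 := ⟨k - 2, by omega⟩
    rw [show m + 2 + 1 = (m+1) + 2 from rfl, Talt] at hf
    simp only [if_neg (by omega : ¬ m + 2 = 0), if_neg (by omega : ¬ m + 1 = 0),
      zero_smul, add_zero] at hf
    -- hf : ((m+2)! : ℤ) • cc x p (m+2) 0 = 0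
    have hK : ((m+2).factorial : K) ≠ 0 := by
      rw [Ne, CharP.cast_eq_zero_iff K p]
      intro hdvd
      have := (Nat.Prime.dvd_factorial (Fact.out : p.Prime)).mp hdvd
      omega
    have hf' : (((m+2).factorial : K)) • cc x p (m+2) 0 = 0 := by
      have : (((m+2).factorial : ℤ) : K) • cc x p (m+2) 0 = 0 := by
        rw [Int.cast_smul_eq_zsmul]; exact hf
      simpa using this
    have := congrArg (fun a => (((m+2).factorial : K))⁻¹ • a) hf'
    simpa [smul_smul, inv_mul_cancel₀ hK] using this
  -- expansion
  obtain ⟨q, hq⟩ : ∃ q, p = q + 2 := ⟨p - 2, by have := (Fact.out : p.Prime).two_le; omega⟩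
  rw [expand_pow h p, hq, Finset.sum_range_succ, Finset.sum_range_succ' _ (q+1),
    Finset.sum_range_succ' _ q]
  rw [← hq, c0, c1, cp]
  have hmid : ∀ i ∈ range q, cc x p (i+1+1) 0 * y^(i+1+1) = 0 := by
    intro i hi
    rw [cmid (i+1+1) (by omega) (by have := Finset.mem_range.mp hi; omega), zero_mul]
  rw [Finset.sum_congr rfl hmid, Finset.sum_const_zero]
  simp only [pow_zero, pow_one, mul_one, one_mul, zero_add]
  abel

end KeyLemma

/-- The degree-`p` cyclic `p`-algebra `[ω, b)_F`: generated by `x, y` with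
`x^p - x = ω`, `y^p = b`, `y x y⁻¹ = x + 1`, presented as a quotient of the free algebra
on two generators (`false ↦ x`, `true ↦ y`). -/
inductive SymbolRel (F : Type*) [Field F] (p : ℕ) (ω b : F) :
    FreeAlgebra F Bool → FreeAlgebra F Bool → Prop
  | x_rel : SymbolRel F p ω b (FreeAlgebra.ι F false ^ p - FreeAlgebra.ι F false)
      (algebraMap F (FreeAlgebra F Bool) ω)
  | y_rel : SymbolRel F p ω b (FreeAlgebra.ι F true ^ p)
      (algebraMap F (FreeAlgebra F Bool) b)
  | conj_rel : SymbolRel F p ω b (FreeAlgebra.ι F true * FreeAlgebra.ι F false)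
      ((FreeAlgebra.ι F false + 1) * FreeAlgebra.ι F true)

/-- The cyclic `p`-algebra `[ω, b)_F` of degree `p`. -/
abbrev SymbolAlgebra (F : Type*) [Field F] (p : ℕ) (ω b : F) :=
  RingQuot (SymbolRel F p ω b)

/-- The generator `x` of `[ω, b)_F`, satisfying `x^p - x = ω`. -/
noncomputable def symX (F : Type*) [Field F] (p : ℕ) (ω b : F) : SymbolAlgebra F p ω b :=
  RingQuot.mkAlgHom F (SymbolRel F p ω b) (FreeAlgebra.ι F false)

/-- The generator `y` of `[ω, b)_F`, satisfying `y^p = b` and `y x y⁻¹ = x + 1`. -/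
noncomputable def symY (F : Type*) [Field F] (p : ℕ) (ω b : F) : SymbolAlgebra F p ω b :=
  RingQuot.mkAlgHom F (SymbolRel F p ω b) (FreeAlgebra.ι F true)

/-- In `[ω, b)_K` the element `z = x + y` satisfies `z^p - z = ω + b`. -/
theorem stmt10 (K : Type*) [Field K] (p : ℕ) [Fact p.Prime] [CharP K p]
    (ω b : K) (hb : b ≠ 0) :
    (symX K p ω b + symY K p ω b) ^ p - (symX K p ω b + symY K p ω b) =
      algebraMap K (SymbolAlgebra K p ω b) (ω + b) := by
  set x := symX K p ω b with hxdef
  set y := symY K p ω b with hydef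
  have hx : x ^ p - x = algebraMap K (SymbolAlgebra K p ω b) ω := by
    have := RingQuot.mkAlgHom_rel K (SymbolRel.x_rel (F := K) (p := p) (ω := ω) (b := b))
    simpa [symX, hxdef, map_sub, map_pow] using this
  have hy : y ^ p = algebraMap K (SymbolAlgebra K p ω b) b := by
    have := RingQuot.mkAlgHom_rel K (SymbolRel.y_rel (F := K) (p := p) (ω := ω) (b := b))
    simpa [symY, hydef, map_pow] using this
  have hc : y * x = x * y + y := by
    have := RingQuot.mkAlgHom_rel K (SymbolRel.conj_rel (F := K) (p := p) (ω := ω) (b := b))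
    simp only [map_mul, map_add, map_one] at this
    rw [hxdef, hydef, symX, symY, this, add_mul, one_mul]
  rw [key_identity K p x y hc, map_add, ← hx, ← hy]
  abel
end

section
/- Let D be a division algebra over a complete discrete valued field K, finite-dimensional over K, with the unique extension of the valuation to D. If D contains an unramified maximal subfield L and also a totally ramified maximal subfield, then the residue algebra of D equals the residue field of L; in particular the residue algebra is a field. -/
/-- The unique extension to a central division algebra `D` over `K` of the valuation of `K`,
normalized with rational values. -/
structure DivAlgValuation (K D : Type*) [Field K] [DivisionRing D] [Algebra K D]
    (vK : CompleteDiscreteValuation K) where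
  w : D → WithTop ℚ
  w_eq_top_iff : ∀ x : D, w x = ⊤ ↔ x = 0
  w_mul : ∀ x y : D, w (x * y) = w x + w y
  w_add : ∀ x y : D, min (w x) (w y) ≤ w (x + y)
  w_extends : ∀ c : K, w (algebraMap K D c) = (vK.v c).map (fun n : ℤ => (n : ℚ))

section Helpers

variable {D : Type*} [DivisionRing D] {w : D → WithTop ℚ}

lemma myw_zero (htop : ∀ x : D, w x = ⊤ ↔ x = 0) : w 0 = ⊤ := (htop 0).mpr rfl

lemma myw_one (htop : ∀ x : D, w x = ⊤ ↔ x = 0) (hmul : ∀ x y : D, w (x * y) = w x + w y) :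
    w 1 = 0 := by
  have h := hmul 1 1
  rw [one_mul] at h
  have hne : w 1 ≠ ⊤ := fun h => one_ne_zero ((htop 1).mp h)
  lift w 1 to ℚ using hne with q
  have : q = q + q := by exact_mod_cast h
  have : q = 0 := by linarith
  exact_mod_cast this

lemma myw_neg (htop : ∀ x : D, w x = ⊤ ↔ x = 0) (hmul : ∀ x y : D, w (x * y) = w x + w y)
    (x : D) : w (-x) = w x := by
  have hm1 : w (-1 : D) = 0 := by
    have h := hmul (-1 : D) (-1)
    rw [neg_mul_neg, one_mul, myw_one htop hmul] at h
    have hne : w (-1 : D) ≠ ⊤ := fun h => (neg_ne_zero.mpr one_ne_zero) ((htop _).mp h)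
    lift w (-1 : D) to ℚ using hne with q
    have : (0 : ℚ) = q + q := by exact_mod_cast h
    have : q = 0 := by linarith
    exact_mod_cast this
  calc w (-x) = w ((-1) * x) := by rw [neg_one_mul]
  _ = w (-1 : D) + w x := hmul _ _
  _ = w x := by rw [hm1, zero_add]

lemma myw_lt_sum {ι : Type*} (htop : ∀ x : D, w x = ⊤ ↔ x = 0)
    (hadd : ∀ x y : D, min (w x) (w y) ≤ w (x + y))
    (s : Finset ι) (t : ι → D) (c : WithTop ℚ) (hc : c < ⊤)
    (h : ∀ i ∈ s, c < w (t i)) : c < w (∑ i ∈ s, t i) := by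
  classical
  induction s using Finset.cons_induction with
  | empty => simpa [myw_zero htop] using hc
  | cons a s ha ih =>
    rw [Finset.sum_cons]
    have h1 : c < w (t a) := h a (Finset.mem_cons_self a s)
    have h2 : c < w (∑ i ∈ s, t i) := ih fun i hi => h i (Finset.mem_cons_of_mem hi)
    exact lt_of_lt_of_le (lt_min h1 h2) (hadd _ _)

/-- key ultrametric lemma: if the values of the terms are pairwise distinct, the value of
the sum is at most the value of each term. -/
lemma myw_sum_le {ι : Type*} [DecidableEq ι] (htop : ∀ x : D, w x = ⊤ ↔ x = 0)
    (hmul : ∀ x y : D, w (x * y) = w x + w y)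
    (hadd : ∀ x y : D, min (w x) (w y) ≤ w (x + y))
    (s : Finset ι) (t : ι → D)
    (hdist : ∀ i ∈ s, ∀ j ∈ s, w (t i) = w (t j) → i = j) :
    ∀ j ∈ s, w (∑ i ∈ s, t i) ≤ w (t j) := by
  intro j hj
  obtain ⟨m, hm, hmin⟩ := s.exists_min_image (fun i => w (t i)) ⟨j, hj⟩
  refine le_trans ?_ (hmin j hj)
  by_cases hmt : w (t m) = ⊤
  · rw [hmt]; exact le_top
  have hB : w (t m) < w (∑ i ∈ s.erase m, t i) := by
    refine myw_lt_sum htop hadd _ _ _ (lt_top_iff_ne_top.mpr hmt) ?_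
    intro i hi
    have his : i ∈ s := Finset.mem_of_mem_erase hi
    have hne : i ≠ m := Finset.ne_of_mem_erase hi
    exact lt_of_le_of_ne (hmin i his) (fun h => hne (hdist i his m hm h.symm))
  have hsplit : t m = (∑ i ∈ s, t i) - ∑ i ∈ s.erase m, t i := by
    rw [← Finset.add_sum_erase s t hm, add_sub_cancel_right]
  have hmin2 : min (w (∑ i ∈ s, t i)) (w (∑ i ∈ s.erase m, t i)) ≤ w (t m) := by
    rw [hsplit, sub_eq_add_neg]
    refine le_trans ?_ (hadd _ _)
    rw [myw_neg htop hmul]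
  by_contra hlt
  push_neg at hlt
  exact absurd hmin2 (not_le.mpr (lt_min hlt hB))

end Helpers

/-- If a central division algebra `D` of degree `n` over a complete discrete valued field
contains an unramified maximal subfield `L` and a totally ramified maximal subfield `T`,
then the residue algebra of `D` equals the residue field of `L` (every element of the
valuation ring of `D` is congruent, modulo the maximal ideal, to an element of `L`);
in particular the residue algebra is commutative, hence a field. -/
theorem stmt19 (K D : Type*) [Field K] [DivisionRing D] [Algebra K D]
    (vK : CompleteDiscreteValuation K) (W : DivAlgValuation K D vK)
    [Algebra.IsCentral K D] [FiniteDimensional K D]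
    (n : ℕ) (hn : 0 < n) (hdim : Module.finrank K D = n ^ 2)
    (L : Subalgebra K D) (hLfield : IsField L) (hLdeg : Module.finrank K L = n)
    (hLunram : ∀ x : D, x ∈ L → x ≠ 0 → ∃ s : ℤ, W.w x = ((s : ℚ) : WithTop ℚ))
    (T : Subalgebra K D) (hTfield : IsField T) (hTdeg : Module.finrank K T = n)
    (hTram : (∀ x : D, x ∈ T → x ≠ 0 →
        ∃ s : ℤ, W.w x = (((s : ℚ) / (n : ℚ) : ℚ) : WithTop ℚ)) ∧
      ∃ x : D, x ∈ T ∧ W.w x = (((1 : ℚ) / (n : ℚ) : ℚ) : WithTop ℚ)) :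
    (∀ x : D, 0 ≤ W.w x → ∃ y : D, y ∈ L ∧ 0 ≤ W.w y ∧ 0 < W.w (x - y)) ∧
      (∀ x y : D, 0 ≤ W.w x → 0 ≤ W.w y → 0 < W.w (x * y - y * x)) := by
  classical
  obtain ⟨hTall, π, hπT, hπ⟩ := hTram
  have htop := W.w_eq_top_iff
  have hmul := W.w_mul
  have hadd := W.w_add
  have hn0 : (n : ℚ) ≠ 0 := Nat.cast_ne_zero.mpr hn.ne'
  have hnpos : (0 : ℚ) < n := by exact_mod_cast hn
  have hπne : π ≠ 0 := by
    intro h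
    rw [h, myw_zero htop] at hπ
    exact (WithTop.coe_ne_top hπ.symm).elim
  -- value of powers of π
  have wpow : ∀ i : ℕ, W.w (π ^ i) = (((i : ℚ) / n : ℚ) : WithTop ℚ) := by
    intro i
    induction i with
    | zero => simp [myw_one htop hmul]
    | succ i ih =>
      rw [pow_succ, hmul, ih, hπ, ← WithTop.coe_add]
      congr 1
      push_cast
      field_simp
  -- module setup
  letI : Field L := hLfield.toField
  have hrank : Module.finrank L D = n := by
    have h : Module.finrank K L * Module.finrank L D = Module.finrank K D :=
      Module.finrank_mul_finrank K L D
    rw [hLdeg, hdim] at h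
    exact Nat.eq_of_mul_eq_mul_left hn (h.trans (sq n))
  have hLne : ∀ a : L, a ≠ 0 → (a : D) ≠ 0 := by
    intro a ha h
    exact ha (Subtype.ext h)
  -- value of a term a * π^i
  have hterm : ∀ (a : L) (i : ℕ), a ≠ 0 →
      ∃ s : ℤ, W.w ((a : D) * π ^ i) = ((((s : ℚ) + (i : ℚ) / n : ℚ)) : WithTop ℚ) := by
    intro a i ha
    obtain ⟨s, hs⟩ := hLunram a a.2 (hLne a ha)
    exact ⟨s, by rw [hmul, hs, wpow, ← WithTop.coe_add]⟩
  -- distinctness of values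
  have hdistinct : ∀ (a b : L) (i j : ℕ), i < n → j < n → a ≠ 0 → b ≠ 0 →
      W.w ((a : D) * π ^ i) = W.w ((b : D) * π ^ j) → i = j := by
    intro a b i j hi hj ha hb heq
    obtain ⟨s, hs⟩ := hterm a i ha
    obtain ⟨t, ht⟩ := hterm b j hb
    rw [hs, ht] at heq
    have heq' : (s : ℚ) + (i : ℚ) / n = (t : ℚ) + (j : ℚ) / n := by exact_mod_cast heq
    have heq2 : (s : ℚ) * n + i = (t : ℚ) * n + j := by
      field_simp at heq'
      linarith
    have hint : s * (n : ℤ) + (i : ℤ) = t * n + (j : ℤ) := by exact_mod_cast heq2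
    have hdvd : (n : ℤ) ∣ ((i : ℤ) - (j : ℤ)) := ⟨t - s, by linarith⟩
    by_contra hne
    have habs : (0 : ℤ) < |(i : ℤ) - (j : ℤ)| := by
      rw [abs_pos, sub_ne_zero]
      exact_mod_cast fun h => hne (by exact_mod_cast h)
    have hled : (n : ℤ) ≤ |(i : ℤ) - (j : ℤ)| := Int.le_of_dvd habs ((dvd_abs _ _).mpr hdvd)
    have : |(i : ℤ) - (j : ℤ)| < n := by
      rw [abs_lt]
      omega
    omega
  -- linear independence of powers of π over L
  haveI : NeZero n := ⟨hn.ne'⟩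
  have hli : LinearIndependent L (fun i : Fin n => π ^ (i : ℕ)) := by
    rw [Fintype.linearIndependent_iff]
    intro g hg
    by_contra hex
    push_neg at hex
    obtain ⟨j, hjne⟩ := hex
    set t : Fin n → D := fun i => ((g i : D) * π ^ (i : ℕ)) with ht
    set s : Finset (Fin n) := Finset.univ.filter (fun i => g i ≠ 0) with hsdef
    have hj : j ∈ s := by simp [hsdef, hjne]
    have hsum : ∑ i ∈ s, t i = 0 := by
      rw [← hg]
      rw [Finset.sum_filter_of_ne]
      · rfl
      · intro i _ hti
        simp only [ht] at hti
        intro hgi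
        exact hti (by rw [hgi]; simp)
    have hkey := myw_sum_le htop hmul hadd s t
      (fun i hi k hk heq => by
        have hgi : g i ≠ 0 := (Finset.mem_filter.mp hi).2
        have hgk : g k ≠ 0 := (Finset.mem_filter.mp hk).2
        exact Fin.ext (hdistinct (g i) (g k) i k i.isLt k.isLt hgi hgk heq)) j hj
    rw [hsum, myw_zero htop] at hkey
    have : t j = 0 := (htop _).mp (top_le_iff.mp hkey)
    have : (g j : D) = 0 := by
      rcases mul_eq_zero.mp this with h | h
      · exact h
      · exact absurd h (pow_ne_zero _ hπne)
    exact hjne (Subtype.ext this)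
  -- basis
  have hcard : Fintype.card (Fin n) = Module.finrank L D := by simp [hrank]
  let bas : Module.Basis (Fin n) L D := basisOfLinearIndependentOfCardEqFinrank hli hcard
  have hbas : ⇑bas = fun i : Fin n => π ^ (i : ℕ) :=
    coe_basisOfLinearIndependentOfCardEqFinrank hli hcard
  -- Claim 1
  have claim1 : ∀ x : D, 0 ≤ W.w x → ∃ y : D, y ∈ L ∧ 0 ≤ W.w y ∧ 0 < W.w (x - y) := by
    intro x hx
    set c : Fin n → L := fun i => bas.repr x i with hc
    set t : Fin n → D := fun i => ((c i : D) * π ^ (i : ℕ)) with ht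
    have hxsum : x = ∑ i ∈ Finset.univ, t i := by
      conv_lhs => rw [← bas.sum_repr x]
      refine Finset.sum_congr rfl fun i _ => ?_
      rw [hbas]
      rfl
    set s : Finset (Fin n) := Finset.univ.filter (fun i => c i ≠ 0) with hsdef
    have hxs : x = ∑ i ∈ s, t i := by
      rw [hxsum]
      rw [Finset.sum_filter_of_ne]
      intro i _ hti hgi
      exact hti (by simp only [ht]; rw [hgi]; simp)
    have hkey : ∀ i ∈ s, 0 ≤ W.w (t i) := by
      intro i hi
      refine le_trans hx ?_
      rw [hxs]
      exact myw_sum_le htop hmul hadd s t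
        (fun i hi k hk heq => by
          have hgi : c i ≠ 0 := (Finset.mem_filter.mp hi).2
          have hgk : c k ≠ 0 := (Finset.mem_filter.mp hk).2
          exact Fin.ext (hdistinct (c i) (c k) i k i.isLt k.isLt hgi hgk heq)) i hi
    refine ⟨(c 0 : D), (c 0).2, ?_, ?_⟩
    · -- 0 ≤ w (c 0)
      by_cases h0 : (0 : Fin n) ∈ s
      · have := hkey 0 h0
        simpa only [ht, Fin.val_zero, pow_zero, mul_one] using this
      · have : c 0 = 0 := by
          by_contra h
          exact h0 (by simp [hsdef, h])
        rw [this]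
        simp only [ZeroMemClass.coe_zero]
        rw [myw_zero htop]
        exact le_top
    · -- 0 < w (x - c 0)
      have hx0 : x - (c 0 : D) = ∑ i ∈ s.erase 0, t i := by
        by_cases h0 : (0 : Fin n) ∈ s
        · rw [hxs, ← Finset.add_sum_erase s t h0]
          have : t 0 = (c 0 : D) := by simp [ht]
          rw [this, add_sub_cancel_left]
        · rw [Finset.erase_eq_of_notMem h0, ← hxs]
          have : c 0 = 0 := by
            by_contra h
            exact h0 (by simp [hsdef, h])
          rw [this]
          simp
      rw [hx0]
      refine myw_lt_sum htop hadd _ _ _ (by simp) ?_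
      intro i hi
      have his : i ∈ s := Finset.mem_of_mem_erase hi
      have hne0 : i ≠ 0 := Finset.ne_of_mem_erase hi
      have hge := hkey i his
      have hgi : c i ≠ 0 := (Finset.mem_filter.mp his).2
      obtain ⟨q, hq⟩ := hterm (c i) i hgi
      rw [hq] at hge ⊢
      have hge' : (0 : ℚ) ≤ (q : ℚ) + (i : ℚ) / n := by exact_mod_cast hge
      have hipos : (0 : ℚ) < (i : ℚ) / n := by
        apply div_pos _ hnpos
        have : 0 < (i : ℕ) := Nat.pos_of_ne_zero (fun h => hne0 (Fin.ext h))
        exact_mod_cast this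
      have hilt : ((i : ℕ) : ℚ) / n < 1 := by
        rw [div_lt_one hnpos]
        exact_mod_cast i.isLt
      have : (0 : ℚ) < (q : ℚ) + (i : ℚ) / n := by
        rcases le_or_gt 0 q with h | h
        · have : (0 : ℚ) ≤ (q : ℚ) := by exact_mod_cast h
          linarith
        · have hq1 : q ≤ -1 := by omega
          have : (q : ℚ) ≤ -1 := by exact_mod_cast hq1
          linarith
      exact_mod_cast this
  refine ⟨claim1, ?_⟩
  -- Claim 2
  intro x y hx hy
  obtain ⟨a, haL, haw, hax⟩ := claim1 x hx
  obtain ⟨b, hbL, hbw, hby⟩ := claim1 y hy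
  have hcomm : a * b = b * a := by
    have h := hLfield.mul_comm ⟨a, haL⟩ ⟨b, hbL⟩
    have := congrArg (Subtype.val) h
    simpa using this
  -- positivity helpers
  have hprod : ∀ u v : D, 0 < W.w u → 0 ≤ W.w v → 0 < W.w (u * v) := by
    intro u v hu hv
    rw [hmul]
    calc (0 : WithTop ℚ) < W.w u := hu
    _ ≤ W.w u + W.w v := le_add_of_nonneg_right hv
  have hprod' : ∀ u v : D, 0 ≤ W.w u → 0 < W.w v → 0 < W.w (u * v) := by
    intro u v hu hv
    rw [hmul]
    calc (0 : WithTop ℚ) < W.w v := hv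
    _ ≤ W.w u + W.w v := le_add_of_nonneg_left hu
  have hposadd : ∀ u v : D, 0 < W.w u → 0 < W.w v → 0 < W.w (u + v) := fun u v hu hv =>
    lt_of_lt_of_le (lt_min hu hv) (hadd u v)
  have hpossub : ∀ u v : D, 0 < W.w u → 0 < W.w v → 0 < W.w (u - v) := by
    intro u v hu hv
    rw [sub_eq_add_neg]
    exact hposadd _ _ hu (by rw [myw_neg htop hmul]; exact hv)
  -- the identity
  have hid : x * y - y * x = ((x - a) * y + a * (y - b)) - ((y - b) * x + b * (x - a)) := by
    have key : ((x - a) * y + a * (y - b)) - ((y - b) * x + b * (x - a)) - (x * y - y * x)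
        = b * a - a * b := by noncomm_ring
    have : ((x - a) * y + a * (y - b)) - ((y - b) * x + b * (x - a)) - (x * y - y * x) = 0 := by
      rw [key, hcomm, sub_self]
    exact (sub_eq_zero.mp this).symm
  rw [hid]
  exact hpossub _ _
    (hposadd _ _ (hprod _ _ hax hy) (hprod' _ _ haw hby))
    (hposadd _ _ (hprod _ _ hby hx) (hprod' _ _ hbw hax))
end
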